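/- Let k ≥ 1 and let u, v be finite words of equal length over an alphabet A with u ∼_k v and u ≁_{k+1} v. Then for every finite word w over A: (a) w·u·u ∼_k w·v·v but w·u·u ≁_{k+1} w·v·v; and (b) w·u·v ∼_{k+1} w·v·u but w·u·v ≁_{k+2} w·v·u. -/

import Mathlib

/-- The number of occurrences of `w` as a (scattered) subword of `u`:
the binomial coefficient of the words `u` and `w`. -/
def wordBinom {A : Type*} [DecidableEq A] (u w : List A) : ℕ := u.sublists.count w

/-- `k`-binomial equivalence of finite words: all binomial coefficients with respect to
words of length at most `k` agree. -/
def BinEquiv {A : Type*} [DecidableEq A] (k : ℕ) (u v : List A) : Prop :=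
  ∀ x : List A, x.length ≤ k → wordBinom u x = wordBinom v x

/-- `k`-binomial equivalence as a setoid. -/
def binSetoid (A : Type*) [DecidableEq A] (k : ℕ) : Setoid (List A) where
  r := BinEquiv k
  iseqv := ⟨fun _ _ _ => rfl, fun h x hx => (h x hx).symm,
    fun h h' x hx => (h x hx).trans (h' x hx)⟩

/-- `u` occurs in the infinite word `x` at position `i`. -/
def OccursAt {A : Type*} (u : List A) (x : ℕ → A) (i : ℕ) : Prop :=
  u = (List.range u.length).map (fun j => x (i + j))

/-- `u` is a factor of the infinite word `x`. -/
def FactorOf {A : Type*} (u : List A) (x : ℕ → A) : Prop := ∃ i, OccursAt u x i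

/-- The set of length-`n` factors of `x`. -/
def Fac {A : Type*} (x : ℕ → A) (n : ℕ) : Set (List A) :=
  {u | u.length = n ∧ FactorOf u x}

/-- Factor complexity of an infinite word. -/
noncomputable def fc {A : Type*} (x : ℕ → A) (n : ℕ) : ℕ := (Fac x n).ncard

/-- `k`-binomial complexity of an infinite word: the number of `k`-binomial equivalence
classes of length-`n` factors. -/
noncomputable def bc {A : Type*} [DecidableEq A] (x : ℕ → A) (k n : ℕ) : ℕ :=
  (Quotient.mk (binSetoid A k) '' Fac x n).ncard

/-!
Binomial coefficients of a product are convolutions: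
`C(p·q, y) = ∑_{y = y₁y₂} C(p, y₁) C(q, y₂)`. This cancels the common prefix `w`, and when
`u ∼_k v` only the splittings with a factor longer than `k` survive in `C(p·r, y) - C(q·s, y)`.
For `|y| = k + 1` these are the two trivial splittings, which gives `u·u ∼_k v·v`,
`C(u·u, y) - C(v·v, y) = 2 (C(u, y) - C(v, y))` and `u·v ∼_{k+1} v·u`.

For `y = b·z·a` with `|z| = k` the same computation shows that `u·v ∼_{k+2} v·u` would force
`C(u, a) δ(b·z) = C(u, b) δ(z·a)`, where `δ = C(u, ·) - C(v, ·)`. Take `x` of length `k + 1` with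
`δ(x) ≠ 0`. Rotating the letters of `x` out and those of `t` in, one at a time, gives
`π(t) δ(x) = π(x) δ(t)` for every `t` of length `k + 1`, where `π(t) = ∏_{a ∈ t} C(u, a) ≥ 0`.
Summing over `t`, and using that the `δ(t)` sum to `C(|u|, k+1) - C(|v|, k+1) = 0`, gives
`δ(x) ∑_t π(t) = 0`; but `π(x) > 0` because `x` is a subword of `u` or of `v`.
-/

open List Finset

section

variable {A : Type*} [DecidableEq A]

theorem wordBinom_eq_count_sublists' (u x : List A) : wordBinom u x = u.sublists'.count x :=
  (sublists_perm_sublists' u).count_eq x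

theorem count_map_cons (a b : A) (x : List A) (L : List (List A)) :
    (L.map (a :: ·)).count (b :: x) = if b = a then L.count x else 0 := by
  split_ifs with hba
  · subst hba
    exact count_map_of_injective _ _ cons_injective _
  · simp [count_eq_zero, Ne.symm hba]

theorem wordBinom_cons_nil (a : A) (u : List A) : wordBinom (a :: u) [] = wordBinom u [] := by
  simp [wordBinom_eq_count_sublists', sublists'_cons, count_eq_zero]

theorem wordBinom_nil_right (u : List A) : wordBinom u [] = 1 := by
  induction u with
  | nil => rfl
  | cons a u ih => rw [wordBinom_cons_nil, ih]

theorem wordBinom_nil_cons (b : A) (x : List A) : wordBinom [] (b :: x) = 0 := rfl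

theorem wordBinom_cons_cons (a : A) (u : List A) (b : A) (x : List A) :
    wordBinom (a :: u) (b :: x) = wordBinom u (b :: x) + if b = a then wordBinom u x else 0 := by
  simp only [wordBinom_eq_count_sublists', sublists'_cons, count_append, count_map_cons]

theorem wordBinom_pos_iff (u x : List A) : 0 < wordBinom u x ↔ x <+ u := by
  rw [wordBinom, count_pos_iff, mem_sublists]

theorem count_sublistsLen (u x : List A) : (sublistsLen x.length u).count x = wordBinom u x := by
  induction u generalizing x with
  | nil => cases x <;> rfl
  | cons a u ih =>
    cases x with
    | nil => simp [sublistsLen_zero, wordBinom_nil_right]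
    | cons b x =>
      rw [length_cons, sublistsLen_succ_cons, count_append, count_map_cons, wordBinom_cons_cons,
        ← ih, ← ih, length_cons]

theorem sum_wordBinom_eq_choose (u : List A) {n : ℕ} (F : Finset (List A))
    (hF : ∀ x ∈ F, x.length = n) (hsub : ∀ x, x <+ u → x.length = n → x ∈ F) :
    ∑ x ∈ F, wordBinom u x = u.length.choose n := by
  calc ∑ x ∈ F, wordBinom u x
      = ∑ x ∈ F, Multiset.count x (sublistsLen n u : Multiset (List A)) :=
        Finset.sum_congr rfl fun x hx => by
          rw [Multiset.coe_count, ← hF x hx, ← count_sublistsLen]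
          -- `Multiset.count` compares with `instBEqOfDecidableEq`, `wordBinom` with `List.instBEq`
          congr 1
          exact lawful_beq_subsingleton _ _
    _ = u.length.choose n := by
        rw [Multiset.sum_count_eq_card fun x hx => ?_, Multiset.coe_card, length_sublistsLen]
        obtain ⟨hxu, hxn⟩ := mem_sublistsLen.1 (Multiset.mem_coe.1 hx)
        exact hsub x hxu hxn

theorem sum_wordBinom_sub_eq_zero {u v : List A} (hlen : u.length = v.length) {n : ℕ}
    (F : Finset (List A)) (hF : ∀ x ∈ F, x.length = n)
    (hsub : ∀ x, (x <+ u ∨ x <+ v) → x.length = n → x ∈ F) :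
    ∑ x ∈ F, ((wordBinom u x : ℤ) - wordBinom v x) = 0 := by
  rw [Finset.sum_sub_distrib, ← Nat.cast_sum, ← Nat.cast_sum,
    sum_wordBinom_eq_choose u F hF fun x hx => hsub x (.inl hx),
    sum_wordBinom_eq_choose v F hF fun x hx => hsub x (.inr hx), hlen, sub_self]

theorem wordBinom_append (p q y : List A) :
    wordBinom (p ++ q) y =
      ∑ i ∈ range (y.length + 1), wordBinom p (y.take i) * wordBinom q (y.drop i) := by
  induction p generalizing y with
  | nil =>
    cases y with
    | nil => simp [wordBinom_nil_right]
    | cons b y =>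
      rw [Finset.sum_range_succ', Finset.sum_eq_zero fun i _ => by
        rw [take_succ_cons, wordBinom_nil_cons, zero_mul]]
      simp [wordBinom_nil_right]
  | cons a p ih =>
    cases y with
    | nil => simp [wordBinom_nil_right]
    | cons b y =>
      rw [cons_append, wordBinom_cons_cons, ih, ih, length_cons,
        Finset.sum_range_succ' _ (y.length + 1), Finset.sum_range_succ' _ (y.length + 1)]
      simp only [take_succ_cons, drop_succ_cons, take_zero, drop_zero, wordBinom_cons_cons,
        wordBinom_cons_nil, add_mul, ite_mul, zero_mul, Finset.sum_add_distrib,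
        Finset.sum_ite_irrel, Finset.sum_const_zero]
      ring

theorem prod_map_mul_eq_of_shift {α R : Type*} [CommMonoid R] (c : α → R) (δ : List α → R)
    {k : ℕ}
    (hshift : ∀ a b z, z.length = k → c a * δ (b :: z) = c b * δ (z ++ [a])) :
    ∀ s r t : List α, s.length + r.length = k + 1 → t.length = s.length →
      (t.map c).prod * δ (s ++ r) = (s.map c).prod * δ (r ++ t)
  | [], r, t, _, ht => by simp [length_eq_zero_iff.1 ht]
  | _ :: _, _, [], _, ht => by simp at ht
  | b :: s, r, a :: t, hsr, ht => by
    have hb := hshift a b (s ++ r) (by simp at hsr ⊢; omega)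
    have ih := prod_map_mul_eq_of_shift c δ hshift s (r ++ [a]) t (by simp at hsr ⊢; omega)
      (by simpa using ht)
    simp only [List.map_cons, List.prod_cons, cons_append, append_assoc, nil_append] at hb ih ⊢
    calc c a * (t.map c).prod * δ (b :: (s ++ r))
        = (t.map c).prod * (c a * δ (b :: (s ++ r))) := by rw [mul_comm (c a), mul_assoc]
      _ = c b * ((t.map c).prod * δ (s ++ (r ++ [a]))) := by rw [hb, mul_left_comm]
      _ = c b * (s.map c).prod * δ (r ++ a :: t) := by rw [ih, mul_assoc]

namespace BinEquiv

variable {k : ℕ} {p q r s u v : List A}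

theorem symm (h : BinEquiv k u v) : BinEquiv k v u := fun x hx => (h x hx).symm

theorem exists_wordBinom_ne (h : BinEquiv k u v) (h' : ¬ BinEquiv (k + 1) u v) :
    ∃ x : List A, x.length = k + 1 ∧ wordBinom u x ≠ wordBinom v x := by
  simp only [BinEquiv, not_forall] at h'
  obtain ⟨x, hx, hne⟩ := h'
  exact ⟨x, by by_contra; exact hne (h x (by omega)), hne⟩

theorem mul_wordBinom_take_drop (hpq : BinEquiv k p q) (hrs : BinEquiv k r s) {y : List A}
    {i : ℕ} (hi : i ≤ k) (hy : y.length ≤ k + i) :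
    wordBinom p (y.take i) * wordBinom r (y.drop i) =
      wordBinom q (y.take i) * wordBinom s (y.drop i) := by
  rw [hpq _ ((length_take_le i y).trans hi), hrs _ (by rw [length_drop]; omega)]

theorem append (hpq : BinEquiv k p q) (hrs : BinEquiv k r s) : BinEquiv k (p ++ r) (q ++ s) :=
  fun y hy => by
    rw [wordBinom_append, wordBinom_append]
    exact Finset.sum_congr rfl fun i hi =>
      mul_wordBinom_take_drop hpq hrs (by simp at hi; omega) (by omega)

theorem wordBinom_append_sub (hpq : BinEquiv k p q) (hrs : BinEquiv k r s) {y : List A}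
    (hy : y.length = k + 1) :
    (wordBinom (p ++ r) y : ℤ) - wordBinom (q ++ s) y =
      (wordBinom p y - wordBinom q y) + (wordBinom r y - wordBinom s y) := by
  rw [wordBinom_append, wordBinom_append, hy]
  push_cast
  rw [← Finset.sum_sub_distrib, Finset.sum_range_succ, Finset.sum_range_succ',
    Finset.sum_eq_zero fun i hi => sub_eq_zero.2 (by
      exact_mod_cast mul_wordBinom_take_drop hpq hrs (by simp at hi; omega) (by omega))]
  rw [← hy, take_length, drop_length]
  simp [wordBinom_nil_right]
  ring

theorem wordBinom_append_comm_sub (hk : 1 ≤ k) (h : BinEquiv k u v) (a b : A) {z : List A}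
    (hz : z.length = k) :
    (wordBinom (u ++ v) (b :: (z ++ [a])) : ℤ) - wordBinom (v ++ u) (b :: (z ++ [a])) =
      wordBinom u [a] * (wordBinom u (b :: z) - wordBinom v (b :: z)) -
        wordBinom u [b] * (wordBinom u (z ++ [a]) - wordBinom v (z ++ [a])) := by
  obtain ⟨m, rfl⟩ : ∃ m, k = m + 1 := ⟨k - 1, by omega⟩
  have hy : (b :: (z ++ [a])).length = m + 3 := by simp [hz]
  rw [wordBinom_append, wordBinom_append, hy]
  push_cast
  rw [← Finset.sum_sub_distrib, Finset.sum_range_succ, Finset.sum_range_succ,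
    Finset.sum_range_succ', Finset.sum_range_succ',
    Finset.sum_eq_zero fun i hi => sub_eq_zero.2 (by
      exact_mod_cast mul_wordBinom_take_drop h h.symm (by simp at hi; omega) (by omega))]
  have htake : (b :: (z ++ [a])).take (m + 2) = b :: z := by rw [take_succ_cons, take_left' hz]
  have hdrop : (b :: (z ++ [a])).drop (m + 2) = [a] := by rw [drop_succ_cons, drop_left' hz]
  have ha : (wordBinom v [a] : ℤ) = wordBinom u [a] := by exact_mod_cast (h [a] (by simp)).symm
  have hb : (wordBinom v [b] : ℤ) = wordBinom u [b] := by exact_mod_cast (h [b] (by simp)).symm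
  simp only [zero_add, htake, hdrop, ← hy, take_length, drop_length]
  simp [wordBinom_nil_right, ha, hb]
  ring

theorem prod_wordBinom_singleton_pos {x : List A} (hk : 1 ≤ k)
    (h : BinEquiv k u v) (hx : x <+ u ∨ x <+ v) :
    0 < (x.map fun a => (wordBinom u [a] : ℤ)).prod := by
  refine List.prod_pos fun _ hc => ?_
  obtain ⟨a, ha, rfl⟩ := mem_map.1 hc
  rcases hx with hxu | hxv
  · exact Nat.cast_pos.2 ((wordBinom_pos_iff u [a]).2 (singleton_sublist.2 (hxu.subset ha)))
  · rw [h [a] (by simpa)]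
    exact Nat.cast_pos.2 ((wordBinom_pos_iff v [a]).2 (singleton_sublist.2 (hxv.subset ha)))

theorem not_succ_append_self (h : BinEquiv k u v) (h' : ¬ BinEquiv (k + 1) u v) :
    ¬ BinEquiv (k + 1) (u ++ u) (v ++ v) := by
  intro H
  obtain ⟨x, hx, hne⟩ := h.exists_wordBinom_ne h'
  have hxx := h.wordBinom_append_sub h hx
  rw [H x hx.le, sub_self] at hxx
  exact hne (by exact_mod_cast (by linarith : (wordBinom u x : ℤ) = wordBinom v x))

theorem succ_append_comm (h : BinEquiv k u v) : BinEquiv (k + 1) (u ++ v) (v ++ u) := by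
  intro y hy
  rcases hy.lt_or_eq with hy | hy
  · exact h.append h.symm y (by omega)
  · have hyy := h.wordBinom_append_sub h.symm hy
    exact_mod_cast (by linarith : (wordBinom (u ++ v) y : ℤ) = wordBinom (v ++ u) y)

theorem not_add_two_append_comm (hk : 1 ≤ k) (hlen : u.length = v.length) (h : BinEquiv k u v)
    (h' : ¬ BinEquiv (k + 1) u v) : ¬ BinEquiv (k + 2) (u ++ v) (v ++ u) := by
  intro H
  obtain ⟨x, hx, hne⟩ := h.exists_wordBinom_ne h'
  set c : A → ℤ := fun a => wordBinom u [a]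
  set δ : List A → ℤ := fun t => wordBinom u t - wordBinom v t
  have hshift : ∀ a b z, z.length = k → c a * δ (b :: z) = c b * δ (z ++ [a]) := by
    intro a b z hz
    have hab := h.wordBinom_append_comm_sub hk a b hz
    rw [H _ (by simp [hz]), sub_self] at hab
    linear_combination -hab
  have hrot : ∀ t : List A, t.length = k + 1 → (t.map c).prod * δ x = (x.map c).prod * δ t :=
    fun t ht => by
      simpa using prod_map_mul_eq_of_shift c δ hshift x [] t (by simp [hx]) (by rw [ht, hx])
  set F := (u.sublists ++ v.sublists).toFinset.filter (·.length = k + 1)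
  have hF : ∀ t ∈ F, t.length = k + 1 := fun t ht => (Finset.mem_filter.1 ht).2
  have hxuv : x <+ u ∨ x <+ v := by
    by_contra! hxuv
    simp only [← wordBinom_pos_iff, not_lt, nonpos_iff_eq_zero] at hxuv
    exact hne (hxuv.1.trans hxuv.2.symm)
  have hxF : x ∈ F := by simpa [F, hx] using hxuv
  have hsum : δ x * ∑ t ∈ F, (t.map c).prod = 0 := by
    rw [Finset.mul_sum]
    calc ∑ t ∈ F, δ x * (t.map c).prod = ∑ t ∈ F, (x.map c).prod * δ t :=
          Finset.sum_congr rfl fun t ht => by rw [mul_comm, hrot t (hF t ht)]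
      _ = 0 := by
          rw [← Finset.mul_sum, sum_wordBinom_sub_eq_zero hlen F hF fun t ht htl => by
            simpa [F, htl] using ht, mul_zero]
  have hpos : 0 < ∑ t ∈ F, (t.map c).prod :=
    (h.prod_wordBinom_singleton_pos hk hxuv).trans_le
      (Finset.single_le_sum (f := fun t => (t.map c).prod) (fun t _ => List.prod_nonneg
        fun _ hct => by obtain ⟨a, -, rfl⟩ := mem_map.1 hct; positivity) hxF)
  exact hne (by exact_mod_cast sub_eq_zero.1 ((mul_eq_zero.1 hsum).resolve_right hpos.ne'))

end BinEquiv

theorem binEquiv_append_left_iff {n : ℕ} {w p q : List A} :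
    BinEquiv n (w ++ p) (w ++ q) ↔ BinEquiv n p q := by
  refine ⟨fun h y hy => ?_, fun h => BinEquiv.append (fun _ _ => rfl) h⟩
  induction hm : y.length using Nat.strong_induction_on generalizing y with
  | _ m ih =>
    have hsuffix :
        ∑ i ∈ range y.length, wordBinom w (y.take (i + 1)) * wordBinom p (y.drop (i + 1)) =
          ∑ i ∈ range y.length, wordBinom w (y.take (i + 1)) * wordBinom q (y.drop (i + 1)) :=
      Finset.sum_congr rfl fun i hi => by
        simp only [Finset.mem_range] at hi
        rw [ih _ (by simp; omega) _ (by simp; omega) rfl]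
    have hwy := h y hy
    rw [wordBinom_append, wordBinom_append, Finset.sum_range_succ', Finset.sum_range_succ',
      hsuffix] at hwy
    simpa [wordBinom_nil_right] using hwy

end

theorem binomial_equivalence_propagation {A : Type*} [DecidableEq A] (k : ℕ) (hk : 1 ≤ k)
    (u v : List A) (hlen : u.length = v.length)
    (h1 : BinEquiv k u v) (h2 : ¬ BinEquiv (k + 1) u v) (w : List A) :
    (BinEquiv k (w ++ u ++ u) (w ++ v ++ v) ∧
      ¬ BinEquiv (k + 1) (w ++ u ++ u) (w ++ v ++ v)) ∧
    (BinEquiv (k + 1) (w ++ u ++ v) (w ++ v ++ u) ∧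
      ¬ BinEquiv (k + 2) (w ++ u ++ v) (w ++ v ++ u)) := by
  simp only [append_assoc, binEquiv_append_left_iff]
  exact ⟨⟨h1.append h1, h1.not_succ_append_self h2⟩, h1.succ_append_comm,
    h1.not_add_two_append_comm hk hlen h2⟩
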